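/- A symmetric tensor A ∈ ℝ^{n×n×p} is T-positive semidefinite if and only if there exists a tensor P ∈ ℝ^{m×n×p} (for some m) such that A = Pᵀ * P, where * is the T-product and Pᵀ is the tensor transpose. -/

import Mathlib

open Matrix BigOperators

variable {p : ℕ}

/-- Block circulant matrix of a third-order tensor (tensor = family of frontal slices). -/
def bcirc {I J : Type*} (A : Fin p → Matrix I J ℝ) :
    Matrix (Fin p × I) (Fin p × J) ℝ :=
  Matrix.of fun ik jl => A (ik.1 - jl.1) ik.2 jl.2

/-- T-product of third-order tensors: `(A*B)^(k) = Σ_j A^(k-j) B^(j)` (indices mod p),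
which is exactly `fold(bcirc(A) · unfold(B))`. -/
def tProd {I J K : Type*} [Fintype J] (A : Fin p → Matrix I J ℝ)
    (B : Fin p → Matrix J K ℝ) : Fin p → Matrix I K ℝ :=
  fun k => ∑ j : Fin p, A (k - j) * B j

/-- Tensor transpose: transpose each frontal slice and reverse slices 2..p. -/
def ttrans {I J : Type*} (A : Fin p → Matrix I J ℝ) :
    Fin p → Matrix J I ℝ :=
  fun k => (A (-k))ᵀ

/-- Identity tensor: first frontal slice the identity matrix, other slices zero. -/
def tid (I : Type*) [DecidableEq I] [NeZero p] : Fin p → Matrix I I ℝ :=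
  fun k => if k = 0 then 1 else 0

/-- Entrywise (Frobenius) inner product of third-order tensors. -/
def tinner {I J : Type*} [Fintype I] [Fintype J]
    (X Y : Fin p → Matrix I J ℝ) : ℝ :=
  ∑ k, ∑ i, ∑ j, X k i j * Y k i j

/-- Symmetric T-positive semidefinite tensor. -/
def TPSD {I : Type*} [Fintype I] (A : Fin p → Matrix I I ℝ) : Prop :=
  ttrans A = A ∧ ∀ X : Fin p → Matrix I (Fin 1) ℝ, 0 ≤ tinner X (tProd A X)

/-- Symmetric T-positive definite tensor. -/
def TPD {I : Type*} [Fintype I] (A : Fin p → Matrix I I ℝ) : Prop :=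
  ttrans A = A ∧ ∀ X : Fin p → Matrix I (Fin 1) ℝ, X ≠ 0 → 0 < tinner X (tProd A X)

/-- k-fold T-product power of a tensor, with `tpow A 0` the identity tensor. -/
def tpow {I : Type*} [Fintype I] [DecidableEq I] [NeZero p]
    (A : Fin p → Matrix I I ℝ) : ℕ → Fin p → Matrix I I ℝ
  | 0 => tid I
  | k + 1 => tProd A (tpow A k)

/-!
`bcirc` is injective and turns the T-product into the matrix product and the tensor transpose
into the matrix transpose, so `TPSD A` says that `bcirc A` is positive semidefinite and
`A = Pᵀ * P` says that `bcirc A = (bcirc P)ᵀ * bcirc P`. A Gram matrix is positive semidefinite.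
Conversely, the square root of `bcirc A` commutes with the cyclic block shifts because
`bcirc A` does and the square root is unique; the shift-invariant matrices are exactly the
block circulant ones, so `√(bcirc A) = bcirc Q` and `A = Qᵀ * Q`.
-/

section BlockCirculant

variable {I J K : Type*}

theorem bcirc_tProd [Fintype J] (A : Fin p → Matrix I J ℝ) (B : Fin p → Matrix J K ℝ) :
    bcirc (tProd A B) = bcirc A * bcirc B := by
  ext ⟨k, i⟩ ⟨l, j⟩
  have : NeZero p := ⟨k.pos.ne'⟩
  simp only [bcirc, tProd, mul_apply, of_apply, Matrix.sum_apply, Fintype.sum_prod_type]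
  refine Fintype.sum_equiv (Equiv.addRight l) _ _ fun t => ?_
  rw [Equiv.coe_addRight, add_sub_cancel_right, sub_add_eq_sub_sub, sub_right_comm]

theorem bcirc_ttrans (A : Fin p → Matrix I J ℝ) : bcirc (ttrans A) = (bcirc A)ᵀ := by
  ext ⟨k, i⟩ ⟨l, j⟩
  have : NeZero p := ⟨k.pos.ne'⟩
  simp only [bcirc, ttrans, of_apply, transpose_apply, neg_sub]

theorem bcirc_injective : Function.Injective (bcirc : (Fin p → Matrix I J ℝ) → _) := by
  intro A B h
  ext k i j
  have : NeZero p := ⟨k.pos.ne'⟩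
  simpa [bcirc] using congr_fun₂ h (k, i) (0, j)

def blockShift [NeZero p] (I : Type*) (t : Fin p) : Fin p × I ≃ Fin p × I :=
  (Equiv.addRight t).prodCongr (Equiv.refl I)

theorem exists_bcirc_eq_iff [NeZero p] {M : Matrix (Fin p × I) (Fin p × J) ℝ} :
    (∃ A, bcirc A = M) ↔ ∀ t, M.submatrix (blockShift I t) (blockShift J t) = M := by
  constructor
  · rintro ⟨A, rfl⟩ t
    ext ⟨k, i⟩ ⟨l, j⟩
    simp [bcirc, blockShift]
  · intro hM
    refine ⟨fun k => of fun i j => M (k, i) (0, j), ?_⟩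
    ext ⟨k, i⟩ ⟨l, j⟩
    simpa [bcirc, blockShift] using (congr_fun₂ (hM l) (k - l, i) (0, j)).symm

end BlockCirculant

/-- `unfold X` for an `I × 1 × p` tensor `X`, read as a vector indexed by `Fin p × I`. -/
@[simps]
def unfoldVec {I : Type*} : (Fin p → Matrix I (Fin 1) ℝ) ≃ (Fin p × I → ℝ) where
  toFun X ki := X ki.1 ki.2 0
  invFun x k := of fun i _ => x (k, i)
  left_inv X := by ext k i j; rw [Subsingleton.elim j 0]; rfl
  right_inv _ := rfl

theorem tinner_tProd_eq_dotProduct_mulVec {I : Type*} [Fintype I] (A : Fin p → Matrix I I ℝ)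
    (X : Fin p → Matrix I (Fin 1) ℝ) :
    tinner X (tProd A X) = unfoldVec X ⬝ᵥ bcirc A *ᵥ unfoldVec X := by
  simp only [tinner, tProd, dotProduct, mulVec, bcirc, Matrix.sum_apply, mul_apply,
    Fintype.sum_prod_type, of_apply, Fin.sum_univ_one, Finset.mul_sum, unfoldVec_apply]

theorem tpsd_iff_posSemidef_bcirc {I : Type*} [Fintype I] (A : Fin p → Matrix I I ℝ) :
    TPSD A ↔ (bcirc A).PosSemidef := by
  rw [posSemidef_iff_dotProduct_mulVec, IsHermitian, conjTranspose_eq_transpose_of_trivial,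
    ← bcirc_ttrans, bcirc_injective.eq_iff, TPSD]
  refine and_congr_right' (unfoldVec.forall_congr fun {X} => ?_)
  rw [tinner_tProd_eq_dotProduct_mulVec, star_trivial]

open scoped MatrixOrder ComplexOrder

theorem Matrix.PosSemidef.sqrt_submatrix_equiv {𝕜 m n : Type*} [RCLike 𝕜] [Fintype m]
    [DecidableEq m] [Fintype n] [DecidableEq n] {M : Matrix m m 𝕜} (hM : M.PosSemidef)
    (e : n ≃ m) : CFC.sqrt (M.submatrix e e) = (CFC.sqrt M).submatrix e e := by
  have hS : (CFC.sqrt M).PosSemidef := nonneg_iff_posSemidef.mp (CFC.sqrt_nonneg M)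
  refine CFC.sqrt_unique ?_ (nonneg_iff_posSemidef.mpr (hS.submatrix e))
  rw [submatrix_mul_equiv, CFC.sqrt_mul_sqrt_self M (nonneg_iff_posSemidef.mpr hM)]

theorem exists_bcirc_eq_sqrt_bcirc {I : Type*} [Fintype I] [DecidableEq I]
    {A : Fin p → Matrix I I ℝ} (hA : (bcirc A).PosSemidef) :
    ∃ Q, bcirc Q = CFC.sqrt (bcirc A) := by
  obtain rfl | _ := eq_zero_or_neZero p
  · exact ⟨0, ext fun ki => ki.1.elim0⟩
  refine exists_bcirc_eq_iff.mpr fun t => ?_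
  rw [← hA.sqrt_submatrix_equiv, exists_bcirc_eq_iff.mp ⟨A, rfl⟩]

theorem tpsd_iff_factorization_general {n p : ℕ} (A : Fin p → Matrix (Fin n) (Fin n) ℝ) :
    TPSD A ↔ ∃ (m : ℕ) (P : Fin p → Matrix (Fin m) (Fin n) ℝ),
      A = tProd (ttrans P) P := by
  rw [tpsd_iff_posSemidef_bcirc]
  constructor
  · intro hA
    obtain ⟨Q, hQ⟩ := exists_bcirc_eq_sqrt_bcirc hA
    have hQ_symm : (bcirc Q)ᵀ = bcirc Q := by
      rw [← conjTranspose_eq_transpose_of_trivial, hQ]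
      exact (nonneg_iff_posSemidef.mp (CFC.sqrt_nonneg _)).isHermitian
    refine ⟨n, Q, bcirc_injective ?_⟩
    rw [bcirc_tProd, bcirc_ttrans, hQ_symm, hQ,
      CFC.sqrt_mul_sqrt_self _ (nonneg_iff_posSemidef.mpr hA)]
  · rintro ⟨m, P, rfl⟩
    rw [bcirc_tProd, bcirc_ttrans, ← conjTranspose_eq_transpose_of_trivial]
    exact posSemidef_conjTranspose_mul_self _

/-- a symmetric tensor A is T-PSD iff A = Pᵀ * P for some tensor P. -/
theorem tpsd_iff_factorization {n p : ℕ} (A : Fin p → Matrix (Fin n) (Fin n) ℝ)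
    (hA : ttrans A = A) :
    TPSD A ↔ ∃ (m : ℕ) (P : Fin p → Matrix (Fin m) (Fin n) ℝ),
      A = tProd (ttrans P) P :=
  tpsd_iff_factorization_general A
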